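/- Let R be a commutative ring and G ⊆ GL_n(R) a finite subgroup. Then β_R(G) ≤ max { β_{R_𝔪}(G) : 𝔪 ⊂ R a maximal ideal }, where for each maximal ideal 𝔪 the group G acts on R_𝔪[x_1,…,x_n] via its image in GL_n(R_𝔪). Equivalently: if d is a natural number such that for every maximal ideal 𝔪 of R the invariant ring R_𝔪[x_1,…,x_n]^G is generated as an R_𝔪-algebra by elements of degree at most d, then R[x_1,…,x_n]^G is generated as an R-algebra by elements of degree at most d. -/
import Mathlib


open MvPolynomial TensorProduct

set_option synthInstance.maxHeartbeats 1000000
set_option maxHeartbeats 1000000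

/-- The action of `σ ∈ GLₙ(R)` on the polynomial ring `R[x₁,…,xₙ]`,
given by `σ(f) = f(σ⁻¹ (x₁,…,xₙ))`. -/
noncomputable def glAct {R : Type*} [CommRing R] {n : ℕ}
    (σ : Matrix.GeneralLinearGroup (Fin n) R) :
    MvPolynomial (Fin n) R →ₐ[R] MvPolynomial (Fin n) R :=
  MvPolynomial.aeval fun i =>
    ∑ j, ((σ⁻¹ : Matrix.GeneralLinearGroup (Fin n) R) : Matrix (Fin n) (Fin n) R) i j •
      MvPolynomial.X j

/-- The ring of invariants `R[x₁,…,xₙ]^G` of a subgroup `G ⊆ GLₙ(R)`,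
as a subalgebra of `R[x₁,…,xₙ]`. -/
noncomputable def invariants {R : Type*} [CommRing R] {n : ℕ}
    (G : Subgroup (Matrix.GeneralLinearGroup (Fin n) R)) :
    Subalgebra R (MvPolynomial (Fin n) R) :=
  ⨅ σ ∈ G, AlgHom.equalizer (glAct σ) (AlgHom.id R _)

/-- The map `GLₙ(R) → GLₙ(R')` induced by a ring homomorphism `R → R'`. -/
noncomputable def glMap {R R' : Type*} [CommRing R] [CommRing R'] {n : ℕ} (f : R →+* R') :
    Matrix.GeneralLinearGroup (Fin n) R →* Matrix.GeneralLinearGroup (Fin n) R' :=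
  Units.map (RingHom.toMonoidHom (RingHom.mapMatrix f))

section Aux

variable {R R' : Type*} [CommRing R] [CommRing R'] {n : ℕ}

lemma mem_invariants {G : Subgroup (Matrix.GeneralLinearGroup (Fin n) R)}
    {f : MvPolynomial (Fin n) R} :
    f ∈ invariants G ↔ ∀ σ ∈ G, glAct σ f = f := by
  simp [invariants, Algebra.mem_iInf, AlgHom.mem_equalizer]

lemma glAct_isHomogeneous (σ : Matrix.GeneralLinearGroup (Fin n) R)
    {p : MvPolynomial (Fin n) R} {m : ℕ} (hp : p.IsHomogeneous m) :
    (glAct σ p).IsHomogeneous m := by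
  have := hp.aeval (S := R) (τ := Fin n) (n := 1)
    (fun i => ∑ j, ((σ⁻¹ : Matrix.GeneralLinearGroup (Fin n) R) : Matrix (Fin n) (Fin n) R) i j •
      MvPolynomial.X j) ?_
  · simpa [glAct] using this
  · intro i
    apply MvPolynomial.IsHomogeneous.sum
    intro j _
    rw [smul_eq_C_mul]
    exact (isHomogeneous_X _ _).C_mul _

lemma glAct_homogeneousComponent (σ : Matrix.GeneralLinearGroup (Fin n) R) (i : ℕ)
    (p : MvPolynomial (Fin n) R) :
    glAct σ (homogeneousComponent i p) = homogeneousComponent i (glAct σ p) := by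
  conv_rhs => rw [← sum_homogeneousComponent p]
  rw [map_sum, map_sum]
  rw [Finset.sum_congr rfl fun j _ => homogeneousComponent_of_mem
    ((mem_homogeneousSubmodule _ _).2
      (glAct_isHomogeneous σ (homogeneousComponent_isHomogeneous j p)))]
  rw [Finset.sum_ite_eq (Finset.range (p.totalDegree + 1)) i
    (fun j => glAct σ (homogeneousComponent j p))]
  split_ifs with hi
  · rfl
  · rw [homogeneousComponent_eq_zero, map_zero]
    simpa using hi

lemma map_homogeneousComponent (f : R →+* R') (i : ℕ) (p : MvPolynomial (Fin n) R) :
    MvPolynomial.map f (homogeneousComponent i p)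
      = homogeneousComponent i (MvPolynomial.map f p) := by
  ext d
  simp only [coeff_map, coeff_homogeneousComponent, apply_ite f, map_zero]

lemma map_glAct (f : R →+* R') (σ : Matrix.GeneralLinearGroup (Fin n) R)
    (p : MvPolynomial (Fin n) R) :
    MvPolynomial.map f (glAct σ p) = glAct (glMap f σ) (MvPolynomial.map f p) := by
  have key : (MvPolynomial.map f).comp (glAct σ : MvPolynomial (Fin n) R →ₐ[R] _).toRingHom
      = (glAct (glMap f σ) : MvPolynomial (Fin n) R' →ₐ[R'] _).toRingHom.comp
        (MvPolynomial.map f) := by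
    apply MvPolynomial.ringHom_ext
    · intro r
      simp [glAct, aeval_C, MvPolynomial.algebraMap_eq]
    · intro i
      simp only [RingHom.comp_apply, AlgHom.toRingHom_eq_coe, RingHom.coe_coe, glAct, aeval_X,
        MvPolynomial.map_X, ← map_inv, glMap, Units.coe_map, RingHom.toMonoidHom_eq_coe,
        MonoidHom.coe_coe, RingHom.mapMatrix_apply, Matrix.map_apply, smul_eq_C_mul, map_sum,
        map_mul, MvPolynomial.map_C]
  exact DFunLike.congr_fun key p

end Aux

section BaseChange

variable {R : Type*} [CommRing R] {n : ℕ}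

noncomputable def polyMapLin (R : Type*) [CommRing R] {n : ℕ} (A : Type*) [CommRing A]
    [Algebra R A] : MvPolynomial (Fin n) R →ₗ[R] MvPolynomial (Fin n) A :=
  (MvPolynomial.mapAlgHom (σ := Fin n) (Algebra.ofId R A)).toLinearMap

lemma polyMapLin_apply (R : Type*) [CommRing R] {n : ℕ} (A : Type*) [CommRing A] [Algebra R A]
    (p : MvPolynomial (Fin n) R) :
    polyMapLin R A p = MvPolynomial.map (algebraMap R A) p := rfl

lemma isBaseChange_polyMapLin (R : Type*) [CommRing R] {n : ℕ} (A : Type*) [CommRing A]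
    [Algebra R A] : IsBaseChange A (polyMapLin R (n := n) A) := by
  unfold IsBaseChange IsTensorProduct
  have h : TensorProduct.lift (((Algebra.linearMap A (Module.End A
        (MvPolynomial (Fin n) R →ₗ[R] MvPolynomial (Fin n) A))).flip
        (polyMapLin R A)).restrictScalars R)
      = ((algebraTensorAlgEquiv R (σ := Fin n) A).toLinearMap.restrictScalars R) := by
    apply TensorProduct.ext'
    intro a p
    simp [algebraTensorAlgEquiv_tmul, polyMapLin_apply, Module.algebraMap_end_apply]
  rw [h]
  exact (algebraTensorAlgEquiv R (σ := Fin n) A).bijective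

lemma isLocalizedModule_polyMapLin (P : Ideal R) [P.IsPrime] :
    IsLocalizedModule P.primeCompl (polyMapLin R (n := n) (Localization.AtPrime P)) :=
  (isLocalizedModule_iff_isBaseChange P.primeCompl (Localization.AtPrime P) _).mpr
    (isBaseChange_polyMapLin R _)

end BaseChange

section KeyLemmas

variable {R R' : Type*} [CommRing R] [CommRing R'] {n : ℕ}

lemma map_mem_invariants (f : R →+* R') (G : Subgroup (Matrix.GeneralLinearGroup (Fin n) R))
    {p : MvPolynomial (Fin n) R} (hp : p ∈ invariants G) :
    MvPolynomial.map f p ∈ invariants (G.map (glMap f)) := by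
  rw [mem_invariants] at hp ⊢
  intro τ hτ
  rw [Subgroup.mem_map] at hτ
  obtain ⟨σ, hσ, rfl⟩ := hτ
  rw [← map_glAct, hp σ hσ]

lemma homog_invariant_local (P : Ideal R) [P.IsPrime]
    (G : Subgroup (Matrix.GeneralLinearGroup (Fin n) R)) [Finite G]
    {g : MvPolynomial (Fin n) (Localization.AtPrime P)} {i : ℕ}
    (hgi : g.IsHomogeneous i)
    (hg : g ∈ invariants (G.map (glMap (algebraMap R (Localization.AtPrime P))))) :
    g ∈ Submodule.span (Localization.AtPrime P)
      (polyMapLin R (Localization.AtPrime P) ''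
        {q : MvPolynomial (Fin n) R | q ∈ invariants G ∧ q.IsHomogeneous i}) := by
  haveI := Fintype.ofFinite G
  haveI := isLocalizedModule_polyMapLin (n := n) P
  set RP := Localization.AtPrime P with hRP
  set φ := polyMapLin R (n := n) RP with hφdef
  obtain ⟨⟨p, s⟩, hps⟩ := IsLocalizedModule.surj P.primeCompl φ g
  rw [Submonoid.smul_def] at hps
  -- hps : (s : R) • g = φ p
  have hinv : ∀ σ : G, φ (glAct (σ : Matrix.GeneralLinearGroup (Fin n) R) p) = φ p := by
    intro σ
    have hτ : glMap (algebraMap R RP) (σ : Matrix.GeneralLinearGroup (Fin n) R)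
        ∈ G.map (glMap (algebraMap R RP)) := Subgroup.mem_map_of_mem _ σ.2
    have hgτ := mem_invariants.1 hg _ hτ
    rw [hφdef, polyMapLin_apply, map_glAct, ← polyMapLin_apply R RP p, ← hφdef, ← hps,
      ← algebraMap_smul RP (s : R) g, map_smul, hgτ]
  choose c hc using fun σ : G => IsLocalizedModule.exists_of_eq
    (S := P.primeCompl) (f := φ) (hinv σ)
  have hc' : ∀ σ : G, ((c σ : R)) • glAct (σ : Matrix.GeneralLinearGroup (Fin n) R) p
      = (c σ : R) • p := by
    intro σ
    have := hc σ
    rwa [Submonoid.smul_def, Submonoid.smul_def] at this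
  set t : P.primeCompl := ∏ σ : G, c σ with ht
  have hts : ∀ σ ∈ G, glAct σ ((t : R) • p) = (t : R) • p := by
    intro σ hσ
    rw [map_smul]
    obtain ⟨e, he⟩ := Finset.dvd_prod_of_mem c (Finset.mem_univ (⟨σ, hσ⟩ : G))
    rw [← ht] at he
    calc (t : R) • glAct σ p
        = (e : R) • ((c ⟨σ, hσ⟩ : R) • glAct σ p) := by
          rw [← mul_smul, ← Submonoid.coe_mul, mul_comm e, ← he]
      _ = (e : R) • ((c ⟨σ, hσ⟩ : R) • p) := by rw [hc' ⟨σ, hσ⟩]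
      _ = (t : R) • p := by
          rw [← mul_smul, ← Submonoid.coe_mul, mul_comm e, ← he]
  have hp'inv : (t : R) • p ∈ invariants G := mem_invariants.2 hts
  set q := MvPolynomial.homogeneousComponent i ((t : R) • p) with hq
  have hqinv : q ∈ invariants G := by
    rw [mem_invariants]
    intro σ hσ
    rw [hq, glAct_homogeneousComponent, hts σ hσ]
  have hqhom : q.IsHomogeneous i := MvPolynomial.homogeneousComponent_isHomogeneous i _
  have hφq : φ q = algebraMap R RP ((t * s : P.primeCompl) : R) • g := by
    rw [hq, hφdef, polyMapLin_apply, map_homogeneousComponent, ← polyMapLin_apply R RP, ← hφdef,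
      map_smul, ← hps, ← algebraMap_smul RP (t : R), ← algebraMap_smul RP (s : R), map_smul,
      map_smul, MvPolynomial.homogeneousComponent_of_mem
        ((MvPolynomial.mem_homogeneousSubmodule _ _).2 hgi), if_pos rfl,
      Submonoid.coe_mul, map_mul, mul_smul]
  obtain ⟨u, huspec⟩ : IsUnit (algebraMap R RP ((t * s : P.primeCompl) : R)) :=
    IsLocalization.map_units RP (t * s)
  have hmem : φ q ∈ Submodule.span RP (φ ''
      {q : MvPolynomial (Fin n) R | q ∈ invariants G ∧ q.IsHomogeneous i}) :=
    Submodule.subset_span ⟨q, ⟨hqinv, hqhom⟩, rfl⟩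
  have hgeq : g = (↑u⁻¹ : RP) • φ q := by
    rw [hφq, ← huspec, smul_smul, Units.inv_mul, one_smul]
  rw [hgeq]
  exact Submodule.smul_mem _ _ hmem

end KeyLemmas

open scoped Pointwise

/-- `R[x₁,…,xₙ]^G` is generated as an `R`-algebra by its homogeneous elements of
degree at most `d`. -/
def genByDeg {n : ℕ} (R : Type*) [CommRing R]
    (G : Subgroup (Matrix.GeneralLinearGroup (Fin n) R)) (d : ℕ) : Prop :=
  Algebra.adjoin R {f : MvPolynomial (Fin n) R |
    f ∈ invariants G ∧ ∃ i ≤ d, MvPolynomial.IsHomogeneous f i} = invariants G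

/-- `f₁, …, fₘ` is a homogeneous system of parameters for `R[x₁,…,xₙ]^G`:
the `fᵢ` are invariant, homogeneous of positive degree, algebraically independent over `R`,
and `R[x₁,…,xₙ]^G` is a finitely generated module over `R[f₁,…,fₘ]`. -/
def IsHSOPInv {n m : ℕ} {R : Type*} [CommRing R]
    (G : Subgroup (Matrix.GeneralLinearGroup (Fin n) R))
    (f : Fin m → MvPolynomial (Fin n) R) : Prop :=
  (∀ i, f i ∈ invariants G) ∧
  (∀ i, ∃ d : ℕ, 0 < d ∧ (f i).IsHomogeneous d) ∧
  AlgebraicIndependent R f ∧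
  ∃ s : Finset (MvPolynomial (Fin n) R),
    ↑s ⊆ (invariants G : Set (MvPolynomial (Fin n) R)) ∧
    (invariants G : Set (MvPolynomial (Fin n) R)) ⊆
      (Submodule.span (Algebra.adjoin R (Set.range f)) (s : Set (MvPolynomial (Fin n) R)) :
        Submodule (Algebra.adjoin R (Set.range f)) (MvPolynomial (Fin n) R))

/-- A commutative ring `T` is Cohen-Macaulay if for every maximal ideal `P` of `T`,
the localization `T_P` contains a regular sequence lying in its maximal ideal whose
length equals the Krull dimension of `T_P` (i.e. `depth T_P = dim T_P`). -/
def IsCohenMacaulayRing (T : Type*) [CommRing T] : Prop :=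
  ∀ (P : Ideal T) (hP : P.IsMaximal),
    haveI : P.IsPrime := hP.isPrime
    ∃ rs : List (Localization.AtPrime P),
      (∀ r ∈ rs, r ∈ IsLocalRing.maximalIdeal (Localization.AtPrime P)) ∧
      RingTheory.Sequence.IsRegular (Localization.AtPrime P) rs ∧
      (rs.length : WithBot ℕ∞) = ringKrullDim (Localization.AtPrime P)

/-- Let `G ⊆ GLₙ(R)` be a finite subgroup. If `d : ℕ` is such that for
every maximal ideal `𝔪` of `R` the invariant ring `R_𝔪[x₁,…,xₙ]^G` is generated as an
`R_𝔪`-algebra by its homogeneous elements of degree at most `d`, then `R[x₁,…,xₙ]^G` is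
generated as an `R`-algebra by its homogeneous elements of degree at most `d`;
i.e. `β_R(G) ≤ max { β_{R_𝔪}(G) }`. -/
theorem stmt_3 {n : ℕ} (R : Type*) [CommRing R]
    (G : Subgroup (Matrix.GeneralLinearGroup (Fin n) R)) [Finite G] (d : ℕ)
    (h : ∀ (P : Ideal R) (hP : P.IsMaximal),
      haveI : P.IsPrime := hP.isPrime
      genByDeg (Localization.AtPrime P)
        (G.map (glMap (algebraMap R (Localization.AtPrime P)))) d) :
    genByDeg R G d := by
  unfold genByDeg
  apply le_antisymm
  · exact Algebra.adjoin_le fun x hx => hx.1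
  · intro f hf
    set A := Algebra.adjoin R {f : MvPolynomial (Fin n) R |
      f ∈ invariants G ∧ ∃ i ≤ d, MvPolynomial.IsHomogeneous f i} with hA
    set I : Ideal R :=
      (Subalgebra.toSubmodule A).comap (LinearMap.toSpanSingleton R _ f) with hI
    have hIT : I = ⊤ := by
      by_contra hITne
      obtain ⟨P, hP, hle⟩ := Ideal.exists_le_maximal I hITne
      haveI : P.IsPrime := hP.isPrime
      set RP := Localization.AtPrime P with hRP
      set φ := polyMapLin R (n := n) RP with hφdef
      haveI := isLocalizedModule_polyMapLin (n := n) P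
      have h1 : φ f ∈ invariants (G.map (glMap (algebraMap R RP))) := by
        rw [hφdef, polyMapLin_apply]; exact map_mem_invariants _ G hf
      have h2 := h P hP
      unfold genByDeg at h2
      rw [← h2] at h1
      -- the span of φ '' A is closed under multiplication
      have hmulset : (⇑φ '' (A : Set (MvPolynomial (Fin n) R))) *
          (⇑φ '' (A : Set (MvPolynomial (Fin n) R))) ⊆
          ⇑φ '' (A : Set (MvPolynomial (Fin n) R)) := by
        rintro z hz
        rw [Set.mem_mul] at hz
        obtain ⟨x, hx, y, hy, rfl⟩ := hz
        obtain ⟨a, ha, rfl⟩ := hx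
        obtain ⟨b, hb, rfl⟩ := hy
        exact ⟨a * b, A.mul_mem ha hb, by
          rw [hφdef, polyMapLin_apply, polyMapLin_apply, polyMapLin_apply, map_mul]⟩
      have hmul : ∀ x y : MvPolynomial (Fin n) RP,
          x ∈ Submodule.span RP (⇑φ '' (A : Set (MvPolynomial (Fin n) R))) →
          y ∈ Submodule.span RP (⇑φ '' (A : Set (MvPolynomial (Fin n) R))) →
          x * y ∈ Submodule.span RP (⇑φ '' (A : Set (MvPolynomial (Fin n) R))) := by
        intro x y hx hy
        have hxy := Submodule.mul_mem_mul hx hy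
        rw [Submodule.span_mul_span] at hxy
        exact Submodule.span_mono hmulset hxy
      have hone : (1 : MvPolynomial (Fin n) RP)
          ∈ Submodule.span RP (⇑φ '' (A : Set (MvPolynomial (Fin n) R))) :=
        Submodule.subset_span ⟨1, A.one_mem, by
          rw [hφdef, polyMapLin_apply, map_one]⟩
      set B : Subalgebra RP (MvPolynomial (Fin n) RP) :=
        Submodule.toSubalgebra (Submodule.span RP (⇑φ '' (A : Set (MvPolynomial (Fin n) R))))
          hone hmul with hB
      have h3 : Algebra.adjoin RP {g : MvPolynomial (Fin n) RP |
          g ∈ invariants (G.map (glMap (algebraMap R RP))) ∧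
            ∃ i ≤ d, MvPolynomial.IsHomogeneous g i} ≤ B := by
        apply Algebra.adjoin_le
        rintro g ⟨hginv, i, hid, hgi⟩
        have hspan := homog_invariant_local P G hgi hginv
        have hsub : {q : MvPolynomial (Fin n) R | q ∈ invariants G ∧ q.IsHomogeneous i} ⊆
            (A : Set (MvPolynomial (Fin n) R)) :=
          fun q hq => Algebra.subset_adjoin ⟨hq.1, i, hid, hq.2⟩
        exact Submodule.span_mono (Set.image_mono hsub) hspan
      have h4 : φ f ∈ Submodule.span RP (⇑φ '' (A : Set (MvPolynomial (Fin n) R))) := h3 h1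
      have h5 : Submodule.span RP (⇑φ '' (A : Set (MvPolynomial (Fin n) R))) ≤
          (Subalgebra.toSubmodule A).localized' RP P.primeCompl φ := by
        rw [Submodule.span_le]
        rintro _ ⟨a, ha, rfl⟩
        exact ⟨a, ha, 1, IsLocalizedModule.mk'_one _ _ _⟩
      have h6 := h5 h4
      rw [Submodule.mem_localized'] at h6
      obtain ⟨m, hm, s, hms⟩ := h6
      rw [IsLocalizedModule.mk'_eq_iff, Submonoid.smul_def, ← map_smul] at hms
      obtain ⟨cc, hcc⟩ := IsLocalizedModule.exists_of_eq (S := P.primeCompl) (f := φ) hms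
      rw [Submonoid.smul_def, Submonoid.smul_def] at hcc
      have hin : ((cc * s : P.primeCompl) : R) • f ∈ Subalgebra.toSubmodule A := by
        rw [Submonoid.coe_mul, mul_smul, ← hcc]
        exact Submodule.smul_mem _ _ hm
      have hmemI : ((cc * s : P.primeCompl) : R) ∈ I := by
        rw [hI, Submodule.mem_comap, LinearMap.toSpanSingleton_apply]
        exact hin
      exact (cc * s).2 (hle hmemI)
    have hone : (1 : R) ∈ I := by rw [hIT]; trivial
    have := hone
    rw [hI, Submodule.mem_comap, LinearMap.toSpanSingleton_apply, one_smul] at this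
    exact this
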